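/- arXiv:1406.0981 — 4 statements merged into one kernel-verified Lean document; each statement's English description precedes it below -/
import Mathlib

section
/- In the quaternion algebra B = ℍ[ℚ, −q, −p] with q, p positive rationals, let ω be an element of ℚ·1 + ℚ·i, not in ℚ·1, with reduced trace t and reduced norm n, and set D := t² − 4n. Then the Gram matrix of the bilinear form ⟨x, y⟩ := Nrd(x + y) − Nrd(x) − Nrd(y) on the basis (1, ω, j, ωj) of B has determinant D²p². -/
open Quaternion

/-- The reduced norm on the quaternion algebra `ℍ[ℚ, a, b]`. -/
noncomputable def Nrd {a b : ℚ} (α : ℍ[ℚ, a, b]) : ℚ := (α * star α).re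

/-- The reduced trace on the quaternion algebra `ℍ[ℚ, a, b]`. -/
noncomputable def Trd {a b : ℚ} (α : ℍ[ℚ, a, b]) : ℚ := (α + star α).re

/-- The bilinear form associated to the reduced norm. -/
noncomputable def bil {a b : ℚ} (x y : ℍ[ℚ, a, b]) : ℚ := Nrd (x + y) - Nrd x - Nrd y

/-!
Writing `⟨x, y⟩ = Trd (x ȳ)`, the form is multiplicative on the right: `⟨x z, y z⟩ = Nrd z ⟨x, y⟩`.
Since `ℚ + ℚi` is orthogonal to `ℚj + ℚk = (ℚ + ℚi) j`, the Gram matrix on `(1, ω, j, ωj)` is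
block diagonal with blocks `G` and `Nrd j • G = p • G`, where `G = [[2, t], [t, 2n]]` is the Gram
matrix of `(1, ω)`. Hence the determinant is `p² (det G)² = p² (4n - t²)² = D² p²`.
-/

namespace QuaternionAlgebra

variable {a b : ℚ}

theorem bil_comm (x y : ℍ[ℚ, a, b]) : bil x y = bil y x := by
  simp only [bil, add_comm x y]; ring

theorem bil_eq_trd_mul_star (x y : ℍ[ℚ, a, b]) : bil x y = Trd (x * star y) := by
  simp only [bil, Nrd, Trd, star_add, mul_add, add_mul, re_add, star_mul, star_star]
  ring

theorem bil_self (x : ℍ[ℚ, a, b]) : bil x x = 2 * Nrd x := by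
  rw [bil_eq_trd_mul_star, mul_star_eq_coe, ← Nrd, Trd, star_coe, ← coe_add, re_coe, two_mul]

theorem trd_star (x : ℍ[ℚ, a, b]) : Trd (star x) = Trd x := by
  rw [Trd, Trd, star_star, add_comm]

theorem trd_smul (r : ℚ) (x : ℍ[ℚ, a, b]) : Trd (r • x) = r * Trd x := by
  simp only [Trd, star_smul, ← smul_add, re_smul, smul_eq_mul]

theorem bil_one_left (x : ℍ[ℚ, a, b]) : bil 1 x = Trd x := by
  rw [bil_eq_trd_mul_star, one_mul, trd_star]

theorem bil_mul_right (x y z : ℍ[ℚ, a, b]) : bil (x * z) (y * z) = Nrd z * bil x y := by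
  rw [bil_eq_trd_mul_star, bil_eq_trd_mul_star, star_mul, mul_assoc, ← mul_assoc z,
    mul_star_eq_coe, ← Nrd, coe_mul_eq_smul, mul_smul_comm, trd_smul]

theorem bil_eq_zero_of_imJ_imK_eq_zero_of_re_imI_eq_zero {x y : ℍ[ℚ, a, b]}
    (hxJ : x.imJ = 0) (hxK : x.imK = 0) (hyr : y.re = 0) (hyI : y.imI = 0) : bil x y = 0 := by
  rw [bil_eq_trd_mul_star, Trd, self_add_star']
  simp [re_mul, hxJ, hxK, hyr, hyI]

theorem nrd_j : Nrd (⟨0, 0, 1, 0⟩ : ℍ[ℚ, a, b]) = -b := by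
  simp [Nrd]

theorem imJ_eq_zero_and_imK_eq_zero_of_mem_span {x : ℍ[ℚ, a, b]}
    (hx : x ∈ Submodule.span ℚ ({1, ⟨0, 1, 0, 0⟩} : Set ℍ[ℚ, a, b])) : x.imJ = 0 ∧ x.imK = 0 := by
  obtain ⟨r, s, rfl⟩ := Submodule.mem_span_pair.mp hx
  simp

end QuaternionAlgebra

theorem Matrix.det_fin_four_blockDiag {R : Type*} [CommRing R] (a b c d e f g h : R) :
    !![a, b, 0, 0; c, d, 0, 0; 0, 0, e, f; 0, 0, g, h].det = (a * d - b * c) * (e * h - f * g) := by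
  simp [Matrix.det_succ_row_zero, Fin.sum_univ_succ, Fin.succAbove]
  ring

open QuaternionAlgebra

theorem gram_det_eq_general (q p : ℚ)
    (ω : ℍ[ℚ, -q, -p])
    (hω : ω ∈ Submodule.span ℚ ({1, ⟨0,1,0,0⟩} : Set ℍ[ℚ, -q, -p]))
    (t n D : ℚ) (ht : Trd ω = t) (hn : Nrd ω = n) (hD : D = t ^ 2 - 4 * n) :
    (Matrix.of fun i j : Fin 4 =>
        bil (![1, ω, ⟨0,0,1,0⟩, ω * ⟨0,0,1,0⟩] i) (![1, ω, ⟨0,0,1,0⟩, ω * ⟨0,0,1,0⟩] j)).det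
      = D ^ 2 * p ^ 2 := by
  set j : ℍ[ℚ, -q, -p] := ⟨0, 0, 1, 0⟩ with hj_def
  obtain ⟨hωJ, hωK⟩ := imJ_eq_zero_and_imK_eq_zero_of_mem_span hω
  have hj : Nrd j = p := by rw [nrd_j, neg_neg]
  have hjcoords : j.re = 0 ∧ j.imI = 0 := ⟨rfl, rfl⟩
  have hωj : (ω * j).re = 0 ∧ (ω * j).imI = 0 := by simp [hj_def, hωJ, hωK]
  have h11 : bil (1 : ℍ[ℚ, -q, -p]) 1 = 2 := by simp [bil_self, Nrd]
  have h1ω : bil 1 ω = t := by rw [bil_one_left, ht]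
  have hωω : bil ω ω = 2 * n := by rw [bil_self, hn]
  have hjj : bil j j = p * 2 := by simpa [hj, h11] using bil_mul_right 1 1 j
  have hjωj : bil j (ω * j) = p * t := by simpa [hj, h1ω] using bil_mul_right 1 ω j
  have hωjωj : bil (ω * j) (ω * j) = p * (2 * n) := by rw [bil_mul_right, hj, hωω]
  have hgram : (Matrix.of fun i k : Fin 4 => bil (![1, ω, j, ω * j] i) (![1, ω, j, ω * j] k)) =
      !![2, t, 0, 0; t, 2 * n, 0, 0; 0, 0, p * 2, p * t; 0, 0, p * t, p * (2 * n)] := by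
    ext i k
    fin_cases i <;> fin_cases k <;>
      simp [h11, h1ω, hωω, hjj, hjωj, hωjωj, bil_comm ω 1, bil_comm (ω * j) j, bil_comm j 1,
        bil_comm j ω, bil_comm (ω * j) 1, bil_comm (ω * j) ω,
        bil_eq_zero_of_imJ_imK_eq_zero_of_re_imI_eq_zero, hωJ, hωK, hωj, hjcoords]
  rw [hgram, Matrix.det_fin_four_blockDiag, hD]
  ring

/-- In `B = ℍ[ℚ, −q, −p]` with `q, p > 0`, let `ω ∈ ℚ·1 + ℚ·i`, `ω ∉ ℚ·1`, with reduced trace `t`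
and reduced norm `n`, and `D := t² − 4n`.  Then the Gram matrix of the bilinear form of the
reduced norm on the basis `(1, ω, j, ωj)` has determinant `D²p²`. -/
theorem gram_det_eq (q p : ℚ) (hq : 0 < q) (hp : 0 < p)
    (ω : ℍ[ℚ, -q, -p])
    (hω : ω ∈ Submodule.span ℚ ({1, ⟨0,1,0,0⟩} : Set ℍ[ℚ, -q, -p]))
    (hω' : ω ∉ Submodule.span ℚ ({1} : Set ℍ[ℚ, -q, -p]))
    (t n D : ℚ) (ht : Trd ω = t) (hn : Nrd ω = n) (hD : D = t ^ 2 - 4 * n) :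
    (Matrix.of fun i j : Fin 4 =>
        bil (![1, ω, ⟨0,0,1,0⟩, ω * ⟨0,0,1,0⟩] i) (![1, ω, ⟨0,0,1,0⟩, ω * ⟨0,0,1,0⟩] j)).det
      = D ^ 2 * p ^ 2 :=
  gram_det_eq_general q p ω hω t n D ht hn hD
end

section
/- Let K be an imaginary quadratic number field with ring of integers R, and let p be a prime number that is inert in R. If 𝔞 is a fractional R-ideal with R ⊆ 𝔞 such that p·N_{K/ℚ}(β) is a rational integer for every β ∈ 𝔞, then 𝔞 = R. -/
/-!
In a quadratic extension every `β` is a root of `X² - Tr(β) X + N(β)`, and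
`Tr(β) = N(β + 1) - N(β) - 1`. Since `1 ∈ 𝔞`, the hypothesis applied to `β` and `β + 1` makes
`Tr(pβ)` and `N(pβ)` integers, so `p𝔞 ⊆ R`, i.e. `R ⊆ 𝔞 ⊆ p⁻¹R`. As `pR` is maximal, `𝔞` is
`R` or `p⁻¹R`, and the latter is impossible because `p · N(p⁻¹) = 1/p ∉ ℤ`.
-/

open Polynomial Module FractionalIdeal

section Quadratic

variable {F L : Type*} [Field F] [CommRing L] [Algebra F L]

theorem Algebra.aeval_X_sq_sub_trace_add_norm_of_finrank_eq_two (h : finrank F L = 2) (β : L) :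
    aeval β (X ^ 2 - C (Algebra.trace F L β) * X + C (Algebra.norm F β)) = 0 := by
  have := finite_of_finrank_eq_succ h
  let b := finBasisOfFinrankEq F L h
  apply Algebra.leftMulMatrix_injective b
  rw [← aeval_algHom_apply, map_zero, ← Matrix.aeval_self_charpoly, Matrix.charpoly_fin_two,
    Algebra.trace_eq_matrix_trace b, Algebra.norm_eq_matrix_det b]

theorem Algebra.norm_add_one_of_finrank_eq_two (h : finrank F L = 2) (β : L) :
    Algebra.norm F (β + 1) = Algebra.norm F β + Algebra.trace F L β + 1 := by
  have := finite_of_finrank_eq_succ h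
  let b := finBasisOfFinrankEq F L h
  simp only [Algebra.trace_eq_matrix_trace b, Algebra.norm_eq_matrix_det b, map_add, map_one,
    Matrix.det_fin_two, Matrix.trace_fin_two, Matrix.add_apply, Matrix.one_apply, Fin.isValue,
    ↓reduceIte, zero_ne_one, one_ne_zero, add_zero]
  ring

theorem isIntegral_of_trace_norm_of_finrank_eq_two {R : Type*} [CommRing R] [Algebra R F]
    [Algebra R L] [IsScalarTower R F L] (h : finrank F L = 2) {γ : L} {t n : R}
    (ht : Algebra.trace F L γ = algebraMap R F t) (hn : Algebra.norm F γ = algebraMap R F n) :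
    IsIntegral R γ := by
  refine ⟨X ^ 2 - C t * X + C n, by monicity!, ?_⟩
  rw [← aeval_def, ← aeval_map_algebraMap F]
  simpa [ht, hn] using Algebra.aeval_X_sq_sub_trace_add_norm_of_finrank_eq_two h γ

end Quadratic

theorem isIntegral_intCast_mul_of_finrank_eq_two {L : Type*} [CommRing L] [Algebra ℚ L]
    (h : finrank ℚ L = 2) (k : ℤ) {β : L}
    (h₀ : ∃ m : ℤ, (k : ℚ) * Algebra.norm ℚ β = m)
    (h₁ : ∃ m : ℤ, (k : ℚ) * Algebra.norm ℚ (β + 1) = m) :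
    IsIntegral ℤ ((k : L) * β) := by
  obtain ⟨m₀, hm₀⟩ := h₀
  obtain ⟨m₁, hm₁⟩ := h₁
  have hk : (k : L) * β = algebraMap ℚ L k * β := by rw [map_intCast]
  refine isIntegral_of_trace_norm_of_finrank_eq_two h (t := m₁ - m₀ - k) (n := k * m₀) ?_ ?_
  · rw [hk, ← Algebra.smul_def, map_smul, smul_eq_mul, eq_intCast]
    push_cast
    rw [← hm₀, ← hm₁, Algebra.norm_add_one_of_finrank_eq_two h β]
    ring
  · rw [hk, map_mul, Algebra.norm_algebraMap, h, eq_intCast]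
    push_cast
    rw [← hm₀]
    ring

theorem FractionalIdeal.eq_one_or_eq_spanSingleton_inv_of_isMaximal {R K : Type*} [CommRing R]
    [IsDomain R] [Field K] [Algebra R K] [IsFractionRing R K] {x : R} (hx0 : x ≠ 0)
    (hx : (Ideal.span {x}).IsMaximal) {𝔞 : FractionalIdeal (nonZeroDivisors R) K}
    (h₁ : 1 ≤ 𝔞) (h₂ : 𝔞 ≤ spanSingleton _ (algebraMap R K x)⁻¹) :
    𝔞 = 1 ∨ 𝔞 = spanSingleton _ (algebraMap R K x)⁻¹ := by
  set y := algebraMap R K x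
  have hy : y ≠ 0 := (map_ne_zero_iff _ (IsFractionRing.injective R K)).mpr hx0
  have hinv : spanSingleton (nonZeroDivisors R) y⁻¹ * spanSingleton _ y = 1 := by
    rw [spanSingleton_mul_spanSingleton, inv_mul_cancel₀ hy, spanSingleton_one]
  have hcancel : 𝔞 = spanSingleton _ y⁻¹ * (spanSingleton _ y * 𝔞) := by
    rw [← mul_assoc, hinv, one_mul]
  have hle_one : spanSingleton _ y * 𝔞 ≤ 1 := by
    calc spanSingleton _ y * 𝔞 ≤ spanSingleton _ y * spanSingleton _ y⁻¹ := by gcongr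
      _ = 1 := by rw [mul_comm, hinv]
  obtain ⟨I, hI⟩ := le_one_iff_exists_coeIdeal.mp hle_one
  have hspan : ((Ideal.span {x} : Ideal R) : FractionalIdeal (nonZeroDivisors R) K) =
      spanSingleton _ y := coeIdeal_span_singleton x
  have hxI : Ideal.span {x} ≤ I := by
    rw [← coeIdeal_le_coeIdeal K, hI, hspan]
    exact le_mul_of_one_le_right' h₁
  rcases hx.out.le_iff.mp hxI with rfl | rfl
  · right
    rw [hcancel, ← hI, coeIdeal_top, mul_one]
  · left
    rw [hcancel, ← hI, hspan, hinv]

open NumberField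

theorem fractionalIdeal_eq_ringOfIntegers_general
    (K : Type*) [Field K] [NumberField K]
    (hquad : Module.finrank ℚ K = 2)
    (p : ℕ) (hp : p.Prime)
    (hinert : (Ideal.span {(p : 𝓞 K)}).IsPrime)
    (𝔞 : FractionalIdeal (nonZeroDivisors (𝓞 K)) K)
    (hsub : 1 ≤ 𝔞)
    (hnorm : ∀ β ∈ 𝔞, ∃ m : ℤ, (p : ℚ) * Algebra.norm ℚ β = (m : ℚ)) :
    𝔞 = 1 := by
  have hp0 : (p : 𝓞 K) ≠ 0 := Nat.cast_ne_zero.mpr hp.ne_zero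
  have hmax : (Ideal.span {(p : 𝓞 K)}).IsMaximal :=
    hinert.isMaximal (by simpa [Ideal.span_singleton_eq_bot] using hp0)
  have hle : 𝔞 ≤ spanSingleton _ (algebraMap (𝓞 K) K p)⁻¹ := by
    intro β hβ
    have hint : IsIntegral ℤ ((p : K) * β) := by
      simpa using isIntegral_intCast_mul_of_finrank_eq_two hquad p (by simpa using hnorm β hβ)
        (by simpa using hnorm _ ((𝔞 : Submodule (𝓞 K) K).add_mem hβ (hsub (one_mem_one _))))
    refine (mem_spanSingleton _).mpr ⟨⟨_, hint⟩, ?_⟩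
    show (p : K) * β * (algebraMap (𝓞 K) K p)⁻¹ = β
    rw [map_natCast]
    field_simp [hp.ne_zero]
  refine (eq_one_or_eq_spanSingleton_inv_of_isMaximal hp0 hmax hsub hle).resolve_right ?_
  intro h
  obtain ⟨m, hm⟩ := hnorm _ (h ▸ mem_spanSingleton_self _ _)
  rw [map_natCast, ← map_natCast (algebraMap ℚ K), ← map_inv₀, Algebra.norm_algebraMap, hquad,
    sq, ← mul_assoc, mul_inv_cancel₀ (by exact_mod_cast hp.ne_zero), one_mul] at hm
  have hden := congrArg Rat.den hm
  rw [Rat.inv_natCast_den_of_pos hp.pos, Rat.den_intCast] at hden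
  exact hp.ne_one hden

/-- Let `K` be an imaginary quadratic number field with ring of integers `R`, and `p` a prime
number that is inert in `R`.  If `𝔞` is a fractional `R`-ideal with `R ⊆ 𝔞` such that
`p · N_{K/ℚ}(β)` is a rational integer for every `β ∈ 𝔞`, then `𝔞 = R`. -/
theorem fractionalIdeal_eq_ringOfIntegers
    (K : Type*) [Field K] [NumberField K]
    (hquad : Module.finrank ℚ K = 2)
    (himag : IsEmpty (K →+* ℝ))
    (p : ℕ) (hp : p.Prime)
    (hinert : (Ideal.span {(p : 𝓞 K)}).IsPrime)
    (𝔞 : FractionalIdeal (nonZeroDivisors (𝓞 K)) K)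
    (hsub : 1 ≤ 𝔞)
    (hnorm : ∀ β ∈ 𝔞, ∃ m : ℤ, (p : ℚ) * Algebra.norm ℚ β = (m : ℚ)) :
    𝔞 = 1 :=
  fractionalIdeal_eq_ringOfIntegers_general K hquad p hp hinert 𝔞 hsub hnorm
end

section
/- Let p ≡ 3 (mod 4) be a prime and work in ℍ[ℚ, −1, −p]. Then each of the two ℤ-submodules O₁ := ℤ·1 + ℤ·i + ℤ·(1+j)/2 + ℤ·(i+k)/2 and O₂ := ℤ·1 + ℤ·i + ℤ·(1+k)/2 + ℤ·(i−j)/2 is a maximal order in ℍ[ℚ, −1, −p], each contains the subring ℤ·1 + ℤ·i + ℤ·j + ℤ·k, and the quotient of each by ℤ·1 + ℤ·i + ℤ·j + ℤ·k, as an additive group, has exactly 4 elements. -/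
open Quaternion

/-- An order in `ℍ[ℚ, a, b]`: a subring containing 1 that spans the algebra over `ℚ` and all of
whose elements have reduced trace and reduced norm in `ℤ`. -/
def IsOrder {a b : ℚ} (O : Set ℍ[ℚ, a, b]) : Prop :=
  (∃ S : Subring ℍ[ℚ, a, b], (S : Set ℍ[ℚ, a, b]) = O) ∧
  Submodule.span ℚ O = ⊤ ∧
  ∀ x ∈ O, (∃ t : ℤ, Trd x = (t : ℚ)) ∧ (∃ n : ℤ, Nrd x = (n : ℚ))

/-- A maximal order: an order not properly contained in any other order. -/
def IsMaximalOrder {a b : ℚ} (O : Set ℍ[ℚ, a, b]) : Prop :=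
  IsOrder O ∧ ∀ O' : Set ℍ[ℚ, a, b], IsOrder O' → O ⊆ O' → O' = O

/-- The suborder `ℤ·1 + ℤ·i + ℤ·j + ℤ·k` of `ℍ[ℚ, a, b]`, as a `ℤ`-submodule. -/
def stdLattice (a b : ℚ) : Submodule ℤ ℍ[ℚ, a, b] :=
  Submodule.span ℤ ({1, ⟨0,1,0,0⟩, ⟨0,0,1,0⟩, ⟨0,0,0,1⟩} : Set ℍ[ℚ, a, b])

/-- The `ℤ`-submodule `ℤ·1 + ℤ·i + ℤ·(1+j)/2 + ℤ·(i+k)/2` of `ℍ[ℚ, −1, −p]`. -/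
def Ord₁ (p : ℚ) : Submodule ℤ ℍ[ℚ, -1, -p] :=
  Submodule.span ℤ ({1, ⟨0,1,0,0⟩,
    ((2:ℚ)⁻¹) • (1 + (⟨0,0,1,0⟩ : ℍ[ℚ, -1, -p])),
    ((2:ℚ)⁻¹) • ((⟨0,1,0,0⟩ : ℍ[ℚ, -1, -p]) + ⟨0,0,0,1⟩)} : Set ℍ[ℚ, -1, -p])

/-- The `ℤ`-submodule `ℤ·1 + ℤ·i + ℤ·(1+k)/2 + ℤ·(i−j)/2` of `ℍ[ℚ, −1, −p]`. -/
def Ord₂ (p : ℚ) : Submodule ℤ ℍ[ℚ, -1, -p] :=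
  Submodule.span ℤ ({1, ⟨0,1,0,0⟩,
    ((2:ℚ)⁻¹) • (1 + (⟨0,0,0,1⟩ : ℍ[ℚ, -1, -p])),
    ((2:ℚ)⁻¹) • ((⟨0,1,0,0⟩ : ℍ[ℚ, -1, -p]) - ⟨0,0,1,0⟩)} : Set ℍ[ℚ, -1, -p])

/-!
`O₂` is the conjugate of `O₁` by `1 + i`; conjugation preserves `Trd`, `Nrd` and the lattice
`ℤ·1 + ℤ·i + ℤ·j + ℤ·k`, so it suffices to treat `O₁`. That `O₁` is closed under multiplication
and has integral trace and norm is a coordinate computation using `p ≡ 3 (mod 4)`. For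
maximality, let `x = x₀ + x₁i + x₂j + x₃k` lie in an order containing `O₁`: then `Nrd x` and all
`Trd (x e)`, `e ∈ O₁`, are integers. This makes `2x₀, 2x₁, 2px₂, 2px₃` integral, and
`(2px₂)² + (2px₃)² = p (4 Nrd x - (2x₀)² - (2x₁)²)`; as `-1` is not a square modulo `p`, `p`
divides both `2px₂` and `2px₃`, so `2x₂, 2x₃ ∈ ℤ`, and the traces against `(1+j)/2` and `(i+k)/2`
then place `x` in `O₁`. Finally, the coefficients of `(1+j)/2` and `(i+k)/2` modulo `2` define a
surjection `O₁ → (ℤ/2)²` whose kernel is `ℤ·1 + ℤ·i + ℤ·j + ℤ·k`.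
-/

theorem Submodule.mem_span_four {R M : Type*} [Ring R] [AddCommGroup M] [Module R M]
    {x g₁ g₂ g₃ g₄ : M} :
    x ∈ span R {g₁, g₂, g₃, g₄} ↔ ∃ a b c d : R, a • g₁ + b • g₂ + c • g₃ + d • g₄ = x := by
  simp only [mem_span_insert, mem_span_singleton]
  constructor
  · rintro ⟨a, _, ⟨b, _, ⟨c, _, ⟨d, rfl⟩, rfl⟩, rfl⟩, rfl⟩
    exact ⟨a, b, c, d, by abel⟩
  · rintro ⟨a, b, c, d, rfl⟩
    exact ⟨a, _, ⟨b, _, ⟨c, _, ⟨d, rfl⟩, rfl⟩, rfl⟩, by abel⟩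

theorem Int.dvd_of_dvd_sq_add_sq {p : ℕ} [Fact p.Prime] (hp3 : p % 4 = 3) {a b : ℤ}
    (h : (p : ℤ) ∣ a ^ 2 + b ^ 2) : (p : ℤ) ∣ a := by
  by_contra ha
  refine ZMod.mod_four_ne_three_of_sq_eq_neg_sq' (x := (b : ZMod p)) (y := a) ?_ ?_ hp3
  · rwa [Ne, ZMod.intCast_zmod_eq_zero_iff_dvd]
  · have := (ZMod.intCast_zmod_eq_zero_iff_dvd _ p).2 h
    push_cast at this
    linear_combination this

section Coordinates

variable {a b : ℚ}

theorem trd_eq (x : ℍ[ℚ, a, b]) : Trd x = 2 * x.re := by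
  simp [Trd]; ring

theorem nrd_eq (x : ℍ[ℚ, a, b]) :
    Nrd x = x.re ^ 2 - a * x.imI ^ 2 - b * x.imJ ^ 2 + a * b * x.imK ^ 2 := by
  simp [Nrd, QuaternionAlgebra.re_mul]; ring

theorem mem_stdLattice {x : ℍ[ℚ, a, b]} :
    x ∈ stdLattice a b ↔ ∃ r s t u : ℤ, x = ⟨r, s, t, u⟩ := by
  rw [stdLattice, Submodule.mem_span_four]
  refine exists₄_congr fun r s t u => ?_
  rw [eq_comm]
  refine Eq.congr_right ?_
  ext <;> simp

theorem span_rat_eq_top_of_stdLattice_le {L : Submodule ℤ ℍ[ℚ, a, b]}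
    (hL : stdLattice a b ≤ L) : Submodule.span ℚ (L : Set ℍ[ℚ, a, b]) = ⊤ := by
  refine eq_top_mono (Submodule.span_mono fun x hx => hL ?_)
    (QuaternionAlgebra.basisOneIJK a 0 b).span_eq
  obtain ⟨i, rfl⟩ := hx
  refine Submodule.subset_span ?_
  fin_cases i <;> simp [QuaternionAlgebra.basisOneIJK]
  rfl

end Coordinates

section Orders

variable {a b : ℚ}

theorem IsOrder.image {O : Set ℍ[ℚ, a, b]} (hO : IsOrder O) (σ : ℍ[ℚ, a, b] ≃ₐ[ℚ] ℍ[ℚ, a, b])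
    (hT : ∀ x, Trd (σ x) = Trd x) (hN : ∀ x, Nrd (σ x) = Nrd x) : IsOrder (σ '' O) := by
  obtain ⟨⟨S, rfl⟩, hspan, hint⟩ := hO
  refine ⟨⟨S.map σ.toRingHom, Subring.coe_map _ _⟩, ?_, ?_⟩
  · change Submodule.span ℚ (σ.toLinearMap '' S) = ⊤
    rw [Submodule.span_image, hspan, Submodule.map_top, LinearMap.range_eq_top]
    exact σ.surjective
  · rintro _ ⟨x, hx, rfl⟩
    rw [hT, hN]
    exact hint x hx

theorem IsMaximalOrder.image {O : Set ℍ[ℚ, a, b]} (hO : IsMaximalOrder O)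
    (σ : ℍ[ℚ, a, b] ≃ₐ[ℚ] ℍ[ℚ, a, b]) (hT : ∀ x, Trd (σ x) = Trd x)
    (hN : ∀ x, Nrd (σ x) = Nrd x) : IsMaximalOrder (σ '' O) := by
  have hT' (x : ℍ[ℚ, a, b]) : Trd (σ.symm x) = Trd x := by rw [← hT, σ.apply_symm_apply]
  have hN' (x : ℍ[ℚ, a, b]) : Nrd (σ.symm x) = Nrd x := by rw [← hN, σ.apply_symm_apply]
  refine ⟨hO.1.image σ hT hN, fun O' hO' hle => ?_⟩
  have hsub : O ⊆ σ.symm '' O' := fun x hx => ⟨σ x, hle ⟨x, hx, rfl⟩, σ.symm_apply_apply x⟩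
  rw [← hO.2 _ (hO'.image σ.symm hT' hN') hsub, Set.image_image]
  simp

theorem IsOrder.isMaximalOrder_of_forall_integral_mem {O : Set ℍ[ℚ, a, b]} (hO : IsOrder O)
    (h : ∀ x, (∀ e ∈ O, ∃ t : ℤ, Trd (x * e) = t) → (∃ n : ℤ, Nrd x = n) → x ∈ O) :
    IsMaximalOrder O := by
  refine ⟨hO, fun O' hO' hle => Set.Subset.antisymm ?_ hle⟩
  obtain ⟨⟨S, rfl⟩, -, hint⟩ := hO'
  exact fun x hx => h x (fun e he => (hint _ (S.mul_mem hx (hle he))).1) (hint x hx).2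

end Orders

/-- Conjugation by `1 + i`. -/
@[simps]
def jkRotation {R : Type*} [CommRing R] (b : R) : ℍ[R, -1, b] ≃ₐ[R] ℍ[R, -1, b] where
  toFun x := ⟨x.re, x.imI, -x.imK, x.imJ⟩
  invFun x := ⟨x.re, x.imI, x.imK, -x.imJ⟩
  left_inv _ := by simp
  right_inv _ := by simp
  map_mul' _ _ := by ext <;> simp <;> ring
  map_add' _ _ := by ext <;> simp [add_comm]
  commutes' _ := by ext <;> simp

section JKRotation

variable {b : ℚ}

theorem trd_jkRotation (x : ℍ[ℚ, -1, b]) : Trd (jkRotation b x) = Trd x := by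
  simp [trd_eq]

theorem nrd_jkRotation (x : ℍ[ℚ, -1, b]) : Nrd (jkRotation b x) = Nrd x := by
  simp [nrd_eq]; ring

theorem map_jkRotation_stdLattice :
    (stdLattice (-1) b).map (jkRotation b : ℍ[ℚ, -1, b] →+ ℍ[ℚ, -1, b]).toIntLinearMap =
      stdLattice (-1) b := by
  ext x
  simp only [Submodule.mem_map, mem_stdLattice]
  constructor
  · rintro ⟨_, ⟨r, s, t, u, rfl⟩, rfl⟩
    exact ⟨r, s, -u, t, by ext <;> simp⟩
  · rintro ⟨r, s, t, u, rfl⟩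
    exact ⟨_, ⟨r, s, u, -t, rfl⟩, by ext <;> simp⟩

end JKRotation

theorem mem_ord₁ {p : ℚ} {x : ℍ[ℚ, -1, -p]} :
    x ∈ Ord₁ p ↔ ∃ r s t u : ℤ, x = ⟨r + t / 2, s + u / 2, t / 2, u / 2⟩ := by
  rw [Ord₁, Submodule.mem_span_four]
  refine exists₄_congr fun r s t u => ?_
  rw [eq_comm]
  refine Eq.congr_right ?_
  ext <;> simp <;> ring

theorem stdLattice_le_ord₁ (p : ℚ) : stdLattice (-1) (-p) ≤ Ord₁ p := by
  intro x hx
  obtain ⟨r, s, t, u, rfl⟩ := mem_stdLattice.1 hx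
  exact mem_ord₁.2 ⟨r - t, s - u, 2 * t, 2 * u, by ext <;> push_cast <;> ring⟩

theorem mul_mem_ord₁ {p : ℕ} (hp3 : p % 4 = 3) {x y : ℍ[ℚ, -1, -(p : ℚ)]}
    (hx : x ∈ Ord₁ (p : ℚ)) (hy : y ∈ Ord₁ (p : ℚ)) : x * y ∈ Ord₁ (p : ℚ) := by
  obtain ⟨m, rfl⟩ : ∃ m, p = 4 * m + 3 := ⟨p / 4, by omega⟩
  obtain ⟨r, s, t, u, rfl⟩ := mem_ord₁.1 hx
  obtain ⟨r', s', t', u', rfl⟩ := mem_ord₁.1 hy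
  refine mem_ord₁.2 ⟨r * r' - s * s' - s' * u - (m + 1) * (t * t' + u * u'),
    r * s' + r' * s + s' * t + (m + 1) * (t * u' - t' * u),
    r * t' + t * t' - s * u' + r' * t + s' * u,
    r * u' + s * t' + u * t' - s' * t + r' * u, ?_⟩
  ext <;> simp <;> ring

theorem isOrder_ord₁ {p : ℕ} (hp3 : p % 4 = 3) :
    IsOrder (Ord₁ (p : ℚ) : Set ℍ[ℚ, -1, -(p : ℚ)]) := by
  have one_mem : (1 : ℍ[ℚ, -1, -(p : ℚ)]) ∈ Ord₁ (p : ℚ) := Submodule.subset_span (by simp)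
  refine ⟨⟨((Ord₁ _).toSubalgebra one_mem fun _ _ => mul_mem_ord₁ hp3).toSubring, rfl⟩,
    span_rat_eq_top_of_stdLattice_le (stdLattice_le_ord₁ _), fun x hx => ?_⟩
  obtain ⟨m, rfl⟩ : ∃ m, p = 4 * m + 3 := ⟨p / 4, by omega⟩
  obtain ⟨r, s, t, u, rfl⟩ := mem_ord₁.1 hx
  exact ⟨⟨2 * r + t, by simp [trd_eq]; ring⟩,
    ⟨r ^ 2 + r * t + s ^ 2 + s * u + (m + 1) * (t ^ 2 + u ^ 2), by simp [nrd_eq]; ring⟩⟩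

theorem exists_int_two_mul_imJ_imK {p : ℕ} [Fact p.Prime] (hp3 : p % 4 = 3)
    {x : ℍ[ℚ, -1, -(p : ℚ)]} {t₀ t₁ t₂ t₃ n : ℤ} (h₀ : 2 * x.re = t₀) (h₁ : 2 * x.imI = t₁)
    (h₂ : 2 * p * x.imJ = t₂) (h₃ : 2 * p * x.imK = t₃) (hn : Nrd x = n) :
    ∃ t u : ℤ, 2 * x.imJ = t ∧ 2 * x.imK = u := by
  have hsq : t₂ ^ 2 + t₃ ^ 2 = p * (4 * n - t₀ ^ 2 - t₁ ^ 2) := by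
    qify
    rw [← h₀, ← h₁, ← h₂, ← h₃, ← hn, nrd_eq]
    ring
  obtain ⟨t, rfl⟩ := Int.dvd_of_dvd_sq_add_sq hp3 (Dvd.intro _ hsq.symm)
  obtain ⟨u, rfl⟩ := Int.dvd_of_dvd_sq_add_sq hp3 (Dvd.intro _ ((add_comm _ _).trans hsq).symm)
  have hp0 : (p : ℚ) ≠ 0 := Nat.cast_ne_zero.2 (Fact.out : p.Prime).ne_zero
  push_cast at h₂ h₃
  exact ⟨t, u, mul_left_cancel₀ hp0 (by linear_combination h₂),
    mul_left_cancel₀ hp0 (by linear_combination h₃)⟩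

theorem mem_ord₁_of_integral {p : ℕ} [Fact p.Prime] (hp3 : p % 4 = 3) {x : ℍ[ℚ, -1, -(p : ℚ)]}
    (htrd : ∀ e ∈ Ord₁ (p : ℚ), ∃ t : ℤ, Trd (x * e) = t) (hnrd : ∃ n : ℤ, Nrd x = n) :
    x ∈ Ord₁ (p : ℚ) := by
  have key (r s t u : ℤ) (q : ℚ) (hq : Trd (x * ⟨r + t / 2, s + u / 2, t / 2, u / 2⟩) = q) :
      ∃ n : ℤ, q = n :=
    hq ▸ htrd _ (mem_ord₁.2 ⟨r, s, t, u, rfl⟩)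
  have trd_mul (e : ℍ[ℚ, -1, -(p : ℚ)]) : Trd (x * e) =
      2 * (x.re * e.re - x.imI * e.imI - p * x.imJ * e.imJ - p * x.imK * e.imK) := by
    simp [trd_eq, QuaternionAlgebra.re_mul]; ring
  obtain ⟨t₀, h₀⟩ := key 1 0 0 0 (2 * x.re) (by rw [trd_mul]; simp)
  obtain ⟨t₁, h₁⟩ := key 0 (-1) 0 0 (2 * x.imI) (by rw [trd_mul]; simp)
  obtain ⟨t₂, h₂⟩ := key 1 0 (-2) 0 (2 * p * x.imJ) (by rw [trd_mul]; norm_num; ring)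
  obtain ⟨t₃, h₃⟩ := key 0 1 0 (-2) (2 * p * x.imK) (by rw [trd_mul]; norm_num; ring)
  obtain ⟨t₄, h₄⟩ := key 0 0 1 0 (x.re - p * x.imJ) (by rw [trd_mul]; norm_num; ring)
  obtain ⟨t₅, h₅⟩ := key 0 0 0 1 (-x.imI - p * x.imK) (by rw [trd_mul]; norm_num; ring)
  obtain ⟨n, hn⟩ := hnrd
  obtain ⟨t, u, hJ, hK⟩ := exists_int_two_mul_imJ_imK hp3 h₀ h₁ h₂ h₃ hn
  obtain ⟨m, hm⟩ : ∃ m : ℕ, (p : ℚ) = 4 * m + 3 :=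
    ⟨p / 4, by exact_mod_cast (by omega : p = 4 * (p / 4) + 3)⟩
  refine mem_ord₁.2 ⟨t₄ + (2 * m + 1) * t, -t₅ - 2 * (m + 1) * u, t, u, ?_⟩
  ext <;> push_cast
  · linear_combination h₄ + p / 2 * hJ + t / 2 * hm
  · linear_combination -h₅ - p / 2 * hK - u / 2 * hm
  · linear_combination hJ / 2
  · linear_combination hK / 2

theorem isMaximalOrder_ord₁ {p : ℕ} [Fact p.Prime] (hp3 : p % 4 = 3) :
    IsMaximalOrder (Ord₁ (p : ℚ) : Set ℍ[ℚ, -1, -(p : ℚ)]) :=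
  (isOrder_ord₁ hp3).isMaximalOrder_of_forall_integral_mem fun _ htrd hnrd =>
    mem_ord₁_of_integral hp3 htrd hnrd

theorem num_two_mul_half (a : ℤ) : ((2 * ((a : ℚ) / 2)).num : ZMod 2) = a := by
  rw [mul_div_cancel₀ _ two_ne_zero, Rat.num_intCast]

/-- The coefficients of `(1 + j)/2` and `(i + k)/2`, modulo `2`. -/
noncomputable def ord₁CoeffMod2 (p : ℚ) : (Ord₁ p).toAddSubgroup →+ ZMod 2 × ZMod 2 where
  toFun x := (((2 * (x : ℍ[ℚ, -1, -p]).imJ).num : ZMod 2),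
    ((2 * (x : ℍ[ℚ, -1, -p]).imK).num : ZMod 2))
  map_zero' := by simp
  map_add' := by
    rintro ⟨x, hx⟩ ⟨y, hy⟩
    obtain ⟨r, s, t, u, rfl⟩ := mem_ord₁.1 hx
    obtain ⟨r', s', t', u', rfl⟩ := mem_ord₁.1 hy
    simp only [AddMemClass.mk_add_mk, QuaternionAlgebra.imJ_add, QuaternionAlgebra.imK_add,
      ← add_div, ← Int.cast_add, num_two_mul_half]
    push_cast
    rfl

theorem ord₁CoeffMod2_surjective (p : ℚ) : Function.Surjective (ord₁CoeffMod2 p) := by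
  rintro ⟨c, d⟩
  refine ⟨⟨_, mem_ord₁.2 ⟨0, 0, c.val, d.val, rfl⟩⟩, ?_⟩
  simp only [ord₁CoeffMod2, AddMonoidHom.coe_mk, ZeroHom.coe_mk, num_two_mul_half]
  simp only [Int.cast_natCast, ZMod.natCast_zmod_val]

theorem ker_ord₁CoeffMod2 (p : ℚ) : (ord₁CoeffMod2 p).ker =
    (stdLattice (-1) (-p)).toAddSubgroup.addSubgroupOf (Ord₁ p).toAddSubgroup := by
  ext ⟨x, hx⟩
  obtain ⟨r, s, t, u, rfl⟩ := mem_ord₁.1 hx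
  simp only [AddMonoidHom.mem_ker, AddSubgroup.mem_addSubgroupOf, Submodule.mem_toAddSubgroup,
    mem_stdLattice, ord₁CoeffMod2, AddMonoidHom.coe_mk, ZeroHom.coe_mk, num_two_mul_half,
    Prod.mk_eq_zero, ZMod.intCast_zmod_eq_zero_iff_dvd, QuaternionAlgebra.mk.injEq]
  constructor
  · rintro ⟨⟨t, rfl⟩, ⟨u, rfl⟩⟩
    refine ⟨r + t, s + u, t, u, ?_⟩
    push_cast
    refine ⟨?_, ?_, ?_, ?_⟩ <;> ring
  · rintro ⟨-, -, t', u', -, -, ht, hu⟩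
    exact ⟨⟨t', by exact_mod_cast (by linarith : (t : ℚ) = 2 * t')⟩,
      ⟨u', by exact_mod_cast (by linarith : (u : ℚ) = 2 * u')⟩⟩

theorem index_stdLattice_ord₁ (p : ℚ) :
    ((stdLattice (-1) (-p)).toAddSubgroup.addSubgroupOf (Ord₁ p).toAddSubgroup).index = 4 := by
  rw [← ker_ord₁CoeffMod2, AddSubgroup.index_ker,
    AddMonoidHom.range_eq_top.2 (ord₁CoeffMod2_surjective p), AddSubgroup.card_top,
    Nat.card_prod, Nat.card_zmod]

theorem map_jkRotation_ord₁ (p : ℚ) :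
    (Ord₁ p).map (jkRotation (-p) : ℍ[ℚ, -1, -p] →+ ℍ[ℚ, -1, -p]).toIntLinearMap = Ord₂ p := by
  rw [Ord₁, Ord₂, Submodule.map_span]
  congr 1
  simp only [Set.image_insert_eq, Set.image_singleton, AddMonoidHom.coe_toIntLinearMap]
  refine congrArg₂ _ ?_ (congrArg₂ _ ?_ (congrArg₂ _ ?_ (congrArg _ ?_))) <;> ext <;> simp

theorem index_stdLattice_ord₂ (p : ℚ) :
    ((stdLattice (-1) (-p)).toAddSubgroup.addSubgroupOf (Ord₂ p).toAddSubgroup).index = 4 := by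
  rw [← index_stdLattice_ord₁ p]
  change (stdLattice (-1) (-p)).toAddSubgroup.relIndex (Ord₂ p).toAddSubgroup =
    (stdLattice (-1) (-p)).toAddSubgroup.relIndex (Ord₁ p).toAddSubgroup
  conv_lhs => rw [← map_jkRotation_ord₁, ← map_jkRotation_stdLattice, Submodule.map_toAddSubgroup,
    Submodule.map_toAddSubgroup]
  exact AddSubgroup.relIndex_map_map_of_injective _ _ (jkRotation _).injective

/-- For a prime `p ≡ 3 (mod 4)`, each of `O₁ = ℤ·1 + ℤ·i + ℤ·(1+j)/2 + ℤ·(i+k)/2` and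
`O₂ = ℤ·1 + ℤ·i + ℤ·(1+k)/2 + ℤ·(i−j)/2` is a maximal order in `ℍ[ℚ, −1, −p]`, each contains
`ℤ·1 + ℤ·i + ℤ·j + ℤ·k`, and the quotient of each by that subring, as an additive group, has
exactly `4` elements. -/
theorem maximal_orders_disc_four (p : ℕ) (hp : p.Prime) (hp3 : p % 4 = 3) :
    (IsMaximalOrder ((Ord₁ (p:ℚ) : Set ℍ[ℚ, -1, -(p:ℚ)]))
      ∧ stdLattice (-1) (-(p:ℚ)) ≤ Ord₁ (p:ℚ)
      ∧ ((stdLattice (-1) (-(p:ℚ))).toAddSubgroup.addSubgroupOf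
          (Ord₁ (p:ℚ)).toAddSubgroup).index = 4)
    ∧ (IsMaximalOrder ((Ord₂ (p:ℚ) : Set ℍ[ℚ, -1, -(p:ℚ)]))
      ∧ stdLattice (-1) (-(p:ℚ)) ≤ Ord₂ (p:ℚ)
      ∧ ((stdLattice (-1) (-(p:ℚ))).toAddSubgroup.addSubgroupOf
          (Ord₂ (p:ℚ)).toAddSubgroup).index = 4) := by
  have : Fact p.Prime := ⟨hp⟩
  refine ⟨⟨isMaximalOrder_ord₁ hp3, stdLattice_le_ord₁ _, index_stdLattice_ord₁ _⟩, ?_, ?_,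
    index_stdLattice_ord₂ _⟩
  · rw [← map_jkRotation_ord₁, Submodule.map_coe]
    exact (isMaximalOrder_ord₁ hp3).image _ trd_jkRotation nrd_jkRotation
  · rw [← map_jkRotation_ord₁, ← map_jkRotation_stdLattice]
    exact Submodule.map_mono (stdLattice_le_ord₁ _)
end

section
/- Let O be a subring of B = ℍ[ℚ, −a, −b] (a, b positive rationals) and let I ⊆ O be a left O-submodule. Let N be a positive integer such that x·ȳ lies in the set N·O for all x, y ∈ I. Then for every α ∈ I, the set I·(ᾱ/N) := { x·ᾱ·(1/N) : x ∈ I } is contained in O and is a left O-submodule of O; moreover, if N equals the greatest common divisor of the integers Nrd(x) over all x ∈ I and α ≠ 0, then the greatest common divisor of Nrd(y) over all y ∈ I·(ᾱ/N) equals Nrd(α)/N. -/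
/-!
Right multiplication by `ᾱ/N` maps `I` into `O` because `x ᾱ ∈ N·O`, and it commutes with left
multiplication by `O`. Writing `Nrd α = N k` and `Nrd x = N uₓ`, multiplicativity of the norm gives
`Nrd (x ᾱ / N) = uₓ k`. Since `N` is the gcd of the `N uₓ`, the cofactors `uₓ` generate the unit
ideal of `ℤ`; so any `d` dividing every `uₓ k` divides `k`, i.e. the new gcd is `k = Nrd α / N`.
-/

open Quaternion

/-- `N` is the greatest common divisor of the (integer) reduced norms of the elements of `S`:
every element of `S` has reduced norm an integer divisible by `N`, and any natural number
dividing all these norms divides `N`. -/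
def IsNormGcd {a b : ℚ} (S : Set ℍ[ℚ, a, b]) (N : ℕ) : Prop :=
  (∀ x ∈ S, ∃ m : ℤ, Nrd x = (m : ℚ) ∧ (N : ℤ) ∣ m) ∧
  ∀ d : ℕ, (∀ x ∈ S, ∃ m : ℤ, Nrd x = (m : ℚ) ∧ (d : ℤ) ∣ m) → d ∣ N

theorem inv_natCast_smul_natCast_mul {A : Type*} [Ring A] [Algebra ℚ A] {N : ℕ} (hN : (N : ℚ) ≠ 0)
    (z : A) : (N : ℚ)⁻¹ • ((N : A) * z) = z := by
  rw [← nsmul_eq_mul, ← Nat.cast_smul_eq_nsmul ℚ, inv_smul_smul₀ hN]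

theorem Ideal.span_eq_top_of_forall_dvd_isUnit {R : Type*} [CommSemiring R]
    [IsPrincipalIdealRing R] {S : Set R} (h : ∀ e, (∀ s ∈ S, e ∣ s) → IsUnit e) :
    Ideal.span S = ⊤ := by
  obtain ⟨g, hg⟩ := Submodule.IsPrincipal.principal (Ideal.span S)
  rw [hg, Ideal.submodule_span_eq, Ideal.span_singleton_eq_top]
  refine h g fun s hs => ?_
  rw [← Ideal.mem_span_singleton, ← Ideal.submodule_span_eq, ← hg]
  exact Ideal.subset_span hs

theorem dvd_of_forall_dvd_mul_of_span_eq_top {R : Type*} [CommSemiring R] {S : Set R}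
    (hS : Ideal.span S = ⊤) {d k : R} (h : ∀ s ∈ S, d ∣ s * k) : d ∣ k := by
  have h1 : (1 : R) ∈ Ideal.span S := hS ▸ Submodule.mem_top
  simpa using Submodule.span_induction (p := fun x _ => d ∣ x * k) h (by simp)
    (fun x y _ _ hx hy => by simpa only [add_mul] using dvd_add hx hy)
    (fun r x _ hx => by simpa only [smul_eq_mul, mul_assoc] using hx.mul_left r) h1

section Nrd

variable {a b : ℚ}

theorem Nrd_mul (x y : ℍ[ℚ, a, b]) : Nrd (x * y) = Nrd x * Nrd y := by
  simp only [Nrd, QuaternionAlgebra.re_mul, QuaternionAlgebra.re_star,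
    QuaternionAlgebra.imI_star, QuaternionAlgebra.imJ_star, QuaternionAlgebra.imK_star,
    QuaternionAlgebra.imI_mul, QuaternionAlgebra.imJ_mul, QuaternionAlgebra.imK_mul]
  ring

theorem Nrd_star (x : ℍ[ℚ, a, b]) : Nrd (star x) = Nrd x := by
  simp only [Nrd, QuaternionAlgebra.re_mul, QuaternionAlgebra.re_star,
    QuaternionAlgebra.imI_star, QuaternionAlgebra.imJ_star, QuaternionAlgebra.imK_star]
  ring

theorem Nrd_smul (c : ℚ) (x : ℍ[ℚ, a, b]) : Nrd (c • x) = c ^ 2 * Nrd x := by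
  simp only [Nrd, QuaternionAlgebra.star_smul, smul_mul_smul_comm,
    QuaternionAlgebra.re_smul, smul_eq_mul]
  ring

theorem Nrd_nonneg (ha : 0 ≤ a) (hb : 0 ≤ b) (x : ℍ[ℚ, -a, -b]) : 0 ≤ Nrd x := by
  have h : Nrd x = x.re ^ 2 + a * x.imI ^ 2 + b * x.imJ ^ 2 + a * b * x.imK ^ 2 := by
    simp only [Nrd, QuaternionAlgebra.re_mul, QuaternionAlgebra.re_star,
      QuaternionAlgebra.imI_star, QuaternionAlgebra.imJ_star, QuaternionAlgebra.imK_star]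
    ring
  rw [h]
  positivity

end Nrd

def normCofactors {a b : ℚ} (I : Set ℍ[ℚ, a, b]) (N : ℕ) : Set ℤ := {u | ∃ x ∈ I, Nrd x = N * u}

namespace IsNormGcd

variable {a b : ℚ} {I : Set ℍ[ℚ, a, b]} {N : ℕ}

theorem span_normCofactors_eq_top (hI : IsNormGcd I N) (hN : 0 < N) :
    Ideal.span (normCofactors I N) = ⊤ := by
  refine Ideal.span_eq_top_of_forall_dvd_isUnit fun e he => ?_
  have h : e.natAbs * N ∣ N := hI.2 _ fun x hx => by
    obtain ⟨m, hm, u, rfl⟩ := hI.1 x hx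
    refine ⟨_, hm, ?_⟩
    rw [Nat.cast_mul, mul_comm]
    exact mul_dvd_mul_left _ (Int.natAbs_dvd.mpr (he u ⟨x, hx, by rw [hm]; push_cast; rfl⟩))
  exact Int.isUnit_iff_natAbs_eq.mpr
    (Nat.eq_one_of_dvd_one ((Nat.mul_dvd_mul_iff_right hN).mp (by simpa using h)))

theorem image_smul_mul_star (hI : IsNormGcd I N) (hN : 0 < N) {k : ℕ} {α : ℍ[ℚ, a, b]}
    (hα : Nrd α = N * k) : IsNormGcd ((fun x => ((N : ℚ)⁻¹) • (x * star α)) '' I) k := by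
  have hNrd : ∀ x (u : ℤ), Nrd x = N * u → Nrd ((N : ℚ)⁻¹ • (x * star α)) = u * k := by
    intro x u hx
    rw [Nrd_smul, Nrd_mul, Nrd_star, hx, hα]
    field_simp
  refine ⟨?_, fun d hd => ?_⟩
  · rintro _ ⟨x, hx, rfl⟩
    obtain ⟨m, hm, u, rfl⟩ := hI.1 x hx
    exact ⟨u * k, by rw [hNrd x u (by rw [hm]; push_cast; rfl)]; push_cast; rfl,
      dvd_mul_left _ _⟩
  · have : (d : ℤ) ∣ k := dvd_of_forall_dvd_mul_of_span_eq_top (hI.span_normCofactors_eq_top hN)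
      fun u ⟨x, hx, hxu⟩ => by
        obtain ⟨m, hm, hdm⟩ := hd _ ⟨x, hx, rfl⟩
        rw [hNrd x u hxu] at hm
        exact (show u * k = m by exact_mod_cast hm) ▸ hdm
    exact_mod_cast this

end IsNormGcd

theorem ideal_norm_rep_general (a b : ℚ) (ha : 0 < a) (hb : 0 < b)
    (O : Subring ℍ[ℚ, -a, -b]) (I : Set ℍ[ℚ, -a, -b])
    (hI0 : (0 : ℍ[ℚ, -a, -b]) ∈ I)
    (hIadd : ∀ x ∈ I, ∀ y ∈ I, x + y ∈ I)
    (hIneg : ∀ x ∈ I, -x ∈ I)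
    (hImod : ∀ o ∈ O, ∀ x ∈ I, o * x ∈ I)
    (N : ℕ) (hN : 0 < N)
    (hNO : ∀ x ∈ I, ∀ y ∈ I, ∃ z ∈ O, x * star y = (N : ℍ[ℚ, -a, -b]) * z)
    (α : ℍ[ℚ, -a, -b]) (hα : α ∈ I) :
    ((fun x => ((N : ℚ)⁻¹) • (x * star α)) '' I ⊆ (O : Set ℍ[ℚ, -a, -b]))
    ∧ ((0 : ℍ[ℚ, -a, -b]) ∈ (fun x => ((N : ℚ)⁻¹) • (x * star α)) '' I)
    ∧ (∀ u ∈ (fun x => ((N : ℚ)⁻¹) • (x * star α)) '' I,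
        ∀ v ∈ (fun x => ((N : ℚ)⁻¹) • (x * star α)) '' I,
          u + v ∈ (fun x => ((N : ℚ)⁻¹) • (x * star α)) '' I)
    ∧ (∀ u ∈ (fun x => ((N : ℚ)⁻¹) • (x * star α)) '' I,
        -u ∈ (fun x => ((N : ℚ)⁻¹) • (x * star α)) '' I)
    ∧ (∀ o ∈ O, ∀ u ∈ (fun x => ((N : ℚ)⁻¹) • (x * star α)) '' I,
        o * u ∈ (fun x => ((N : ℚ)⁻¹) • (x * star α)) '' I)
    ∧ (IsNormGcd I N → α ≠ 0 →
        ∃ M : ℕ, (M : ℚ) * (N : ℚ) = Nrd α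
          ∧ IsNormGcd ((fun x => ((N : ℚ)⁻¹) • (x * star α)) '' I) M) := by
  refine ⟨?_, ⟨0, hI0, by simp⟩, ?_, ?_, ?_, ?_⟩
  · rintro _ ⟨x, hx, rfl⟩
    obtain ⟨z, hz, hxz⟩ := hNO x hx α hα
    simpa only [SetLike.mem_coe, hxz, inv_natCast_smul_natCast_mul (by positivity : (N : ℚ) ≠ 0)]
      using hz
  · rintro _ ⟨x, hx, rfl⟩ _ ⟨y, hy, rfl⟩
    exact ⟨x + y, hIadd x hx y hy, by simp only [add_mul, smul_add]⟩
  · rintro _ ⟨x, hx, rfl⟩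
    exact ⟨-x, hIneg x hx, by simp only [neg_mul, smul_neg]⟩
  · rintro o ho _ ⟨x, hx, rfl⟩
    exact ⟨o * x, hImod o ho x hx, by simp only [mul_assoc, mul_smul_comm]⟩
  · intro hI _
    obtain ⟨m, hm, k, rfl⟩ := hI.1 α hα
    have hk : (0 : ℚ) ≤ k := (mul_nonneg_iff_of_pos_left (by positivity : (0 : ℚ) < N)).mp
      (by simpa only [hm, Int.cast_mul, Int.cast_natCast] using Nrd_nonneg ha.le hb.le α)
    lift k to ℕ using (by exact_mod_cast hk)
    have hα' : Nrd α = N * k := by rw [hm]; push_cast; rfl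
    exact ⟨k, by rw [hα', mul_comm], hI.image_smul_mul_star hN hα'⟩

/-- Let `O` be a subring of `B = ℍ[ℚ, −a, −b]` and `I ⊆ O` a left `O`-submodule, and let `N > 0`
be an integer with `x·ȳ ∈ N·O` for all `x, y ∈ I`.  Then for every `α ∈ I` the set
`I·(ᾱ/N) = { x·ᾱ/N : x ∈ I }` is contained in `O` and is a left `O`-submodule of `O`; moreover
if `N = gcd { Nrd x : x ∈ I }` and `α ≠ 0`, then `gcd { Nrd y : y ∈ I·(ᾱ/N) } = Nrd α / N`. -/
theorem ideal_norm_rep (a b : ℚ) (ha : 0 < a) (hb : 0 < b)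
    (O : Subring ℍ[ℚ, -a, -b]) (I : Set ℍ[ℚ, -a, -b])
    (hI0 : (0 : ℍ[ℚ, -a, -b]) ∈ I)
    (hIadd : ∀ x ∈ I, ∀ y ∈ I, x + y ∈ I)
    (hIneg : ∀ x ∈ I, -x ∈ I)
    (hIO : I ⊆ (O : Set ℍ[ℚ, -a, -b]))
    (hImod : ∀ o ∈ O, ∀ x ∈ I, o * x ∈ I)
    (N : ℕ) (hN : 0 < N)
    (hNO : ∀ x ∈ I, ∀ y ∈ I, ∃ z ∈ O, x * star y = (N : ℍ[ℚ, -a, -b]) * z)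
    (α : ℍ[ℚ, -a, -b]) (hα : α ∈ I) :
    ((fun x => ((N : ℚ)⁻¹) • (x * star α)) '' I ⊆ (O : Set ℍ[ℚ, -a, -b]))
    ∧ ((0 : ℍ[ℚ, -a, -b]) ∈ (fun x => ((N : ℚ)⁻¹) • (x * star α)) '' I)
    ∧ (∀ u ∈ (fun x => ((N : ℚ)⁻¹) • (x * star α)) '' I,
        ∀ v ∈ (fun x => ((N : ℚ)⁻¹) • (x * star α)) '' I,
          u + v ∈ (fun x => ((N : ℚ)⁻¹) • (x * star α)) '' I)
    ∧ (∀ u ∈ (fun x => ((N : ℚ)⁻¹) • (x * star α)) '' I,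
        -u ∈ (fun x => ((N : ℚ)⁻¹) • (x * star α)) '' I)
    ∧ (∀ o ∈ O, ∀ u ∈ (fun x => ((N : ℚ)⁻¹) • (x * star α)) '' I,
        o * u ∈ (fun x => ((N : ℚ)⁻¹) • (x * star α)) '' I)
    ∧ (IsNormGcd I N → α ≠ 0 →
        ∃ M : ℕ, (M : ℚ) * (N : ℚ) = Nrd α
          ∧ IsNormGcd ((fun x => ((N : ℚ)⁻¹) • (x * star α)) '' I) M) :=
  ideal_norm_rep_general a b ha hb O I hI0 hIadd hIneg hImod N hN hNO α hα
end
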